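/- Let ρ be a separable density matrix on ℂⁿ ⊗ ℂⁿ, i.e. a finite convex combination of tensor products of density matrices. Then for every maximally entangled unit vector φ in ℂⁿ ⊗ ℂⁿ, ⟨φ| ρ |φ⟩ ≤ 1/n. In particular, the entangled fraction of a separable state is at most 1/n. -/

import Mathlib

open Matrix
open scoped ComplexOrder Kronecker

noncomputable section

/-- A density matrix: positive semidefinite with trace one. -/
def IsDensityMatrix {m : Type*} [Fintype m] (ρ : Matrix m m ℂ) : Prop :=
  ρ.PosSemidef ∧ ρ.trace = 1

/-- `ρ` is separable on `ℂⁿ ⊗ ℂⁿ`: a finite convex combination of tensor (Kronecker)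
products of density matrices. -/
def IsSeparableState {n : ℕ} (ρ : Matrix (Fin n × Fin n) (Fin n × Fin n) ℂ) : Prop :=
  ∃ (k : ℕ) (p : Fin k → ℝ) (A B : Fin k → Matrix (Fin n) (Fin n) ℂ),
    (∀ i, 0 ≤ p i) ∧ (∑ i, p i = 1) ∧
    (∀ i, IsDensityMatrix (A i)) ∧ (∀ i, IsDensityMatrix (B i)) ∧
    ρ = ∑ i, (p i : ℂ) • (A i ⊗ₖ B i)

/-- Let `ρ` be a separable density matrix on `ℂⁿ ⊗ ℂⁿ`.  Then for every maximally
entangled unit vector `φ` (with coefficient matrix `N`, so that `φ (i,j) = N i j` and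
the reduced density matrix of `φ` on the first factor is `N Nᴴ = (1/n)·1`), one has
`⟨φ| ρ |φ⟩ ≤ 1/n`.  In particular the entangled fraction of a separable state is at
most `1/n`. -/
lemma trace_mul_conjTranspose_self {m k : Type*} [Fintype m] [Fintype k]
    (M : Matrix m k ℂ) :
    (M * Mᴴ).trace = ∑ i, ∑ j, (Complex.normSq (M i j) : ℂ) := by
  simp [Matrix.trace, Matrix.mul_apply, Matrix.conjTranspose_apply, Matrix.diag,
    Complex.mul_conj]

lemma trace_mul_re_le {m : Type*} [Fintype m] [DecidableEq m]
    {X Y : Matrix m m ℂ} (hX : X.PosSemidef) (hY : Y.PosSemidef) :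
    (X * Y).trace.re ≤ X.trace.re * Y.trace.re := by
  obtain ⟨C, rfl⟩ : ∃ C : Matrix m m ℂ, X = Cᴴ * C := by
    open scoped MatrixOrder in
    exact CStarAlgebra.nonneg_iff_eq_star_mul_self.mp hX.nonneg
  obtain ⟨E, rfl⟩ : ∃ E : Matrix m m ℂ, Y = Eᴴ * E := by
    open scoped MatrixOrder in
    exact CStarAlgebra.nonneg_iff_eq_star_mul_self.mp hY.nonneg
  have h1 : (Cᴴ * C * (Eᴴ * E)).trace = ((C * Eᴴ) * (C * Eᴴ)ᴴ).trace := by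
    rw [Matrix.conjTranspose_mul, Matrix.conjTranspose_conjTranspose]
    rw [show Cᴴ * C * (Eᴴ * E) = Cᴴ * (C * Eᴴ * E) by noncomm_ring]
    rw [Matrix.trace_mul_comm]
    noncomm_ring
  have h2 : (Cᴴ * C).trace = ((Cᴴ) * (Cᴴ)ᴴ).trace := by simp
  have h3 : (Eᴴ * E).trace = ((Eᴴ) * (Eᴴ)ᴴ).trace := by simp
  rw [h1, h2, h3, trace_mul_conjTranspose_self, trace_mul_conjTranspose_self,
    trace_mul_conjTranspose_self]
  simp only [Complex.re_sum, Complex.ofReal_re]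
  rw [show (∑ x : m, ∑ y : m, Complex.normSq (Cᴴ x y))
        = ∑ y : m, ∑ x : m, Complex.normSq (Cᴴ x y)
      from Finset.sum_comm,
    show (∑ x : m, ∑ y : m, Complex.normSq (Eᴴ x y))
        = ∑ y : m, ∑ x : m, Complex.normSq (Eᴴ x y)
      from Finset.sum_comm,
    Finset.sum_mul_sum _ _ _ _]
  refine Finset.sum_le_sum fun i _ => Finset.sum_le_sum fun j _ => ?_
  -- normSq ((C * Eᴴ) i j) ≤ (∑ normSq (Cᴴ i α)) * (∑ normSq (Eᴴ j α))
  have habs : ‖(C * Eᴴ) i j‖ ≤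
      ∑ α, ‖Cᴴ α i‖ * ‖Eᴴ α j‖ := by
    rw [Matrix.mul_apply]
    refine (norm_sum_le _ _).trans_eq ?_
    refine Finset.sum_congr rfl fun α _ => ?_
    simp [Matrix.conjTranspose_apply, norm_mul]
  calc (Complex.normSq ((C * Eᴴ) i j))
      = ‖(C * Eᴴ) i j‖ ^ 2 := (Complex.sq_norm _).symm
    _ ≤ (∑ α, ‖Cᴴ α i‖ * ‖Eᴴ α j‖) ^ 2 := by
        exact pow_le_pow_left₀ (norm_nonneg _) habs 2
    _ ≤ (∑ α, ‖Cᴴ α i‖ ^ 2) * ∑ α, ‖Eᴴ α j‖ ^ 2 :=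
        Finset.sum_mul_sq_le_sq_mul_sq _ _ _
    _ = (∑ α, Complex.normSq (Cᴴ α i)) * ∑ α, Complex.normSq (Eᴴ α j) := by
        simp [Complex.sq_norm]


lemma kron_mulVec {n : ℕ} (A B N : Matrix (Fin n) (Fin n) ℂ) :
    (A ⊗ₖ B).mulVec (fun ij : Fin n × Fin n => N ij.1 ij.2)
      = fun ij : Fin n × Fin n => (A * N * Bᵀ) ij.1 ij.2 := by
  funext ij
  obtain ⟨i, j⟩ := ij
  simp only [Matrix.mulVec, dotProduct, Matrix.mul_apply, Matrix.kroneckerMap_apply,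
    Matrix.transpose_apply, Fintype.sum_prod_type, Finset.sum_mul, Finset.mul_sum]
  rw [Finset.sum_comm]
  exact Finset.sum_congr rfl fun l _ => Finset.sum_congr rfl fun k _ => by ring

lemma vec_dot {n : ℕ} (N M : Matrix (Fin n) (Fin n) ℂ) :
    (star (fun ij : Fin n × Fin n => N ij.1 ij.2)) ⬝ᵥ
        (fun ij : Fin n × Fin n => M ij.1 ij.2) = (Nᴴ * M).trace := by
  simp only [dotProduct, Matrix.trace, Matrix.diag, Matrix.mul_apply,
    Matrix.conjTranspose_apply, Pi.star_apply, Fintype.sum_prod_type, RCLike.star_def]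
  rw [Finset.sum_comm]

theorem stmt5 {n : ℕ} (hn : 0 < n) (ρ : Matrix (Fin n × Fin n) (Fin n × Fin n) ℂ)
    (hρ : IsDensityMatrix ρ) (hsep : IsSeparableState ρ)
    (N : Matrix (Fin n) (Fin n) ℂ)
    (hmaxent : N * Nᴴ = ((n : ℂ))⁻¹ • (1 : Matrix (Fin n) (Fin n) ℂ)) :
    ((star (fun ij : Fin n × Fin n => N ij.1 ij.2)) ⬝ᵥ
        ρ.mulVec (fun ij : Fin n × Fin n => N ij.1 ij.2)).re ≤ 1 / n := by
  obtain ⟨k, p, A, B, hp0, hp1, hA, hB, hρeq⟩ := hsep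
  set φ : Fin n × Fin n → ℂ := fun ij => N ij.1 ij.2 with hφ
  have hterm : ∀ i : Fin k, (star φ ⬝ᵥ (A i ⊗ₖ B i).mulVec φ)
      = ((Nᴴ * A i * N) * (B i)ᵀ).trace := by
    intro i
    rw [hφ, kron_mulVec, vec_dot]
    congr 1
    noncomm_ring
  have hbound : ∀ i : Fin k, ((Nᴴ * A i * N) * (B i)ᵀ).trace.re ≤ 1 / n := by
    intro i
    have hX : (Nᴴ * A i * N).PosSemidef := (hA i).1.conjTranspose_mul_mul_same N
    have hY : ((B i)ᵀ).PosSemidef := (hB i).1.transpose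
    have htX : (Nᴴ * A i * N).trace = ((n : ℂ))⁻¹ := by
      rw [Matrix.trace_mul_cycle, hmaxent, Matrix.smul_mul, Matrix.one_mul,
        Matrix.trace_smul, (hA i).2, smul_eq_mul, mul_one]
    have htY : ((B i)ᵀ).trace = 1 := by rw [Matrix.trace_transpose, (hB i).2]
    have := trace_mul_re_le hX hY
    rw [htX, htY] at this
    simpa [Complex.inv_re, Complex.normSq, one_div] using this
  have hsum : star φ ⬝ᵥ (∑ t, (p t : ℂ) • (A t ⊗ₖ B t)).mulVec φ
      = ∑ t, (p t : ℂ) * (star φ ⬝ᵥ (A t ⊗ₖ B t).mulVec φ) := by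
    simp only [Matrix.mulVec, dotProduct, Matrix.sum_apply, Matrix.smul_apply,
      smul_eq_mul, Finset.sum_mul, Finset.mul_sum]
    have swap : ∀ (f : Fin n × Fin n → Fin n × Fin n → Fin k → ℂ),
        (∑ x, ∑ y, ∑ t, f x y t) = ∑ t, ∑ x, ∑ y, f x y t := fun f =>
      (Finset.sum_congr rfl fun x _ => Finset.sum_comm).trans Finset.sum_comm
    refine (swap _).trans ?_
    exact Finset.sum_congr rfl fun t _ => Finset.sum_congr rfl fun x _ =>
      Finset.sum_congr rfl fun y _ => by ring
  rw [hρeq, hsum, Complex.re_sum]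
  calc (∑ i, ((p i : ℂ) * (star φ ⬝ᵥ (A i ⊗ₖ B i).mulVec φ)).re)
      ≤ ∑ i, p i * (1 / n) := by
        refine Finset.sum_le_sum fun i _ => ?_
        have : ((p i : ℂ) * ((Nᴴ * A i * N) * (B i)ᵀ).trace).re
            = p i * ((Nᴴ * A i * N) * (B i)ᵀ).trace.re := by
          simp [Complex.mul_re]
        rw [hterm i, this]
        exact mul_le_mul_of_nonneg_left (hbound i) (hp0 i)
    _ = 1 / n := by rw [← Finset.sum_mul, hp1, one_mul]
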